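/- With Σ(β1,β2,β3) = Σ_{n1,n2,n3≥0} (−1)^{n3} x^{n1+2n2+3n3} q^{4C(n1,2)+4C(n2,2)+18C(n3,2)+2n1n2+6n2n3+6n3n1+β1·n1+β2·n2+β3·n3} / ((q²;q²)_{n1} (q²;q²)_{n2} (q⁶;q⁶)_{n3}), the identity Σ(1,2,9) = (1 + xq + x²q²)·Σ(3,6,15) holds in the ring of formal power series in x and q with rational coefficients. -/

import Mathlib

noncomputable section

instance : TopologicalSpace (MvPowerSeries (Fin 2) ℚ) :=
  Pi.topologicalSpace

/-- `x` -/
def Xx : MvPowerSeries (Fin 2) ℚ := MvPowerSeries.X 0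
/-- `q` -/
def Qq : MvPowerSeries (Fin 2) ℚ := MvPowerSeries.X 1

/-- The `q`-Pochhammer symbol `(A; B)_n = ∏_{k=0}^{n-1} (1 - A⬝Bᵏ)`. -/
def poch (A B : MvPowerSeries (Fin 2) ℚ) (n : ℕ) : MvPowerSeries (Fin 2) ℚ :=
  ∏ k ∈ Finset.range n, (1 - A * B ^ k)

/-- The triple sum `Σ(β₁,β₂,β₃)`. -/
def SigmaSum (b1 b2 b3 : ℕ) : MvPowerSeries (Fin 2) ℚ :=
  ∑' n : ℕ × ℕ × ℕ,
    (-1 : MvPowerSeries (Fin 2) ℚ) ^ n.2.2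
      * Xx ^ (n.1 + 2 * n.2.1 + 3 * n.2.2)
      * Qq ^ (4 * Nat.choose n.1 2 + 4 * Nat.choose n.2.1 2 + 18 * Nat.choose n.2.2 2
          + 2 * n.1 * n.2.1 + 6 * n.2.1 * n.2.2 + 6 * n.2.2 * n.1
          + b1 * n.1 + b2 * n.2.1 + b3 * n.2.2)
      * (poch (Qq ^ 2) (Qq ^ 2) n.1 * poch (Qq ^ 2) (Qq ^ 2) n.2.1
          * poch (Qq ^ 6) (Qq ^ 6) n.2.2)⁻¹

/-! ### Auxiliary infrastructure -/

instance : T2Space (MvPowerSeries (Fin 2) ℚ) :=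
  inferInstanceAs (T2Space ((Fin 2 →₀ ℕ) → ℚ))

instance : IsTopologicalAddGroup (MvPowerSeries (Fin 2) ℚ) :=
  inferInstanceAs (IsTopologicalAddGroup ((Fin 2 →₀ ℕ) → ℚ))

theorem contMulLeft (c : MvPowerSeries (Fin 2) ℚ) :
    Continuous fun ψ : MvPowerSeries (Fin 2) ℚ => c * ψ := by
  classical
  refine continuous_pi fun d => ?_
  have h : ∀ ψ : MvPowerSeries (Fin 2) ℚ, (c * ψ) d =
      ∑ p ∈ Finset.HasAntidiagonal.antidiagonal d, c p.1 * ψ p.2 :=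
    fun ψ => MvPowerSeries.coeff_mul d c ψ
  simp only [h]
  exact continuous_finset_sum _ fun p _ => continuous_const.mul (continuous_apply p.2)

theorem coeff_X0_pow_mul (E : MvPowerSeries (Fin 2) ℚ) (m : ℕ) (d : Fin 2 →₀ ℕ) (h : d 0 < m) :
    MvPowerSeries.coeff d (Xx ^ m * E) = 0 := by
  classical
  rw [MvPowerSeries.coeff_mul]
  apply Finset.sum_eq_zero
  rintro ⟨u, v⟩ huv
  rw [Finset.HasAntidiagonal.mem_antidiagonal] at huv
  rw [Xx, MvPowerSeries.coeff_X_pow]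
  rw [if_neg, zero_mul]
  rintro rfl
  have : d 0 = m + v 0 := by rw [← huv]; simp
  omega

/-- the summand of `SigmaSum` -/
def ff (b1 b2 b3 : ℕ) (n : ℕ × ℕ × ℕ) : MvPowerSeries (Fin 2) ℚ :=
  (-1 : MvPowerSeries (Fin 2) ℚ) ^ n.2.2
    * Xx ^ (n.1 + 2 * n.2.1 + 3 * n.2.2)
    * Qq ^ (4 * Nat.choose n.1 2 + 4 * Nat.choose n.2.1 2 + 18 * Nat.choose n.2.2 2
        + 2 * n.1 * n.2.1 + 6 * n.2.1 * n.2.2 + 6 * n.2.2 * n.1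
        + b1 * n.1 + b2 * n.2.1 + b3 * n.2.2)
    * (poch (Qq ^ 2) (Qq ^ 2) n.1 * poch (Qq ^ 2) (Qq ^ 2) n.2.1
        * poch (Qq ^ 6) (Qq ^ 6) n.2.2)⁻¹

theorem SigmaSum_eq (b1 b2 b3 : ℕ) : SigmaSum b1 b2 b3 = ∑' n, ff b1 b2 b3 n := rfl

theorem summable_ff (b1 b2 b3 : ℕ) : Summable (ff b1 b2 b3) := by
  refine (Pi.summable).mpr fun d => ?_
  refine summable_of_ne_finset_zero
    (s := Finset.range (d 0 + 1) ×ˢ (Finset.range (d 0 + 1) ×ˢ Finset.range (d 0 + 1))) ?_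
  intro n hn
  have hm : d 0 < n.1 + 2 * n.2.1 + 3 * n.2.2 := by
    simp only [Finset.mem_product, Finset.mem_range] at hn
    omega
  have hf : ff b1 b2 b3 n = Xx ^ (n.1 + 2 * n.2.1 + 3 * n.2.2)
      * ((-1 : MvPowerSeries (Fin 2) ℚ) ^ n.2.2
        * Qq ^ (4 * Nat.choose n.1 2 + 4 * Nat.choose n.2.1 2 + 18 * Nat.choose n.2.2 2
            + 2 * n.1 * n.2.1 + 6 * n.2.1 * n.2.2 + 6 * n.2.2 * n.1
            + b1 * n.1 + b2 * n.2.1 + b3 * n.2.2)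
        * (poch (Qq ^ 2) (Qq ^ 2) n.1 * poch (Qq ^ 2) (Qq ^ 2) n.2.1
            * poch (Qq ^ 6) (Qq ^ 6) n.2.2)⁻¹) := by
    unfold ff; ring
  show ff b1 b2 b3 n d = 0
  have : ff b1 b2 b3 n d = MvPowerSeries.coeff d (ff b1 b2 b3 n) := rfl
  rw [this, hf]
  exact coeff_X0_pow_mul _ _ _ hm

theorem poch_succ (A B : MvPowerSeries (Fin 2) ℚ) (n : ℕ) :
    poch A B (n + 1) = poch A B n * (1 - A * B ^ n) :=
  Finset.prod_range_succ _ n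

theorem key_cancel (A C : MvPowerSeries (Fin 2) ℚ)
    (hA : MvPowerSeries.constantCoeff A ≠ 0) :
    A * (A * C)⁻¹ = C⁻¹ := by
  rw [MvPowerSeries.mul_inv_rev, ← mul_assoc, mul_comm A, mul_assoc,
    MvPowerSeries.mul_inv_cancel _ hA, mul_one]

theorem cancel_poch (A B : MvPowerSeries (Fin 2) ℚ)
    (hA : MvPowerSeries.constantCoeff A = 0) (n : ℕ)
    (C : MvPowerSeries (Fin 2) ℚ) :
    (1 - A * B ^ n) * (poch A B (n + 1) * C)⁻¹ = (poch A B n * C)⁻¹ := by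
  rw [poch_succ, show poch A B n * (1 - A * B ^ n) * C = (1 - A * B ^ n) * (poch A B n * C) by
    ring]
  refine key_cancel _ _ ?_
  simp [hA]

theorem constCoeff_Qqpow (k : ℕ) (hk : k ≠ 0) :
    MvPowerSeries.constantCoeff (Qq ^ k) = 0 := by
  simp [Qq, hk]

theorem choose2_succ (n : ℕ) : Nat.choose (n + 1) 2 = Nat.choose n 2 + n := by
  rw [Nat.choose_succ_succ, Nat.choose_one_right, Nat.add_comm]

/-! ### Termwise shift identities -/

theorem hterm1 (b1 b2 b3 n1 n2 n3 : ℕ) :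
    ff b1 b2 b3 (n1 + 1, n2, n3) - ff (b1 + 2) b2 b3 (n1 + 1, n2, n3)
      = (Xx * Qq ^ b1) * ff (b1 + 4) (b2 + 2) (b3 + 6) (n1, n2, n3) := by
  have hI := cancel_poch (Qq ^ 2) (Qq ^ 2) (constCoeff_Qqpow 2 (by norm_num)) n1
    (poch (Qq ^ 2) (Qq ^ 2) n2 * poch (Qq ^ 6) (Qq ^ 6) n3)
  simp only [ff, choose2_succ]
  rw [show poch (Qq ^ 2) (Qq ^ 2) (n1 + 1) * poch (Qq ^ 2) (Qq ^ 2) n2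
      * poch (Qq ^ 6) (Qq ^ 6) n3 = poch (Qq ^ 2) (Qq ^ 2) (n1 + 1)
      * (poch (Qq ^ 2) (Qq ^ 2) n2 * poch (Qq ^ 6) (Qq ^ 6) n3) from mul_assoc _ _ _,
    show poch (Qq ^ 2) (Qq ^ 2) n1 * poch (Qq ^ 2) (Qq ^ 2) n2
      * poch (Qq ^ 6) (Qq ^ 6) n3 = poch (Qq ^ 2) (Qq ^ 2) n1
      * (poch (Qq ^ 2) (Qq ^ 2) n2 * poch (Qq ^ 6) (Qq ^ 6) n3) from mul_assoc _ _ _]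
  linear_combination ((-1 : MvPowerSeries (Fin 2) ℚ) ^ n3 * Xx ^ (n1 + 2 * n2 + 3 * n3 + 1)
    * Qq ^ (4 * Nat.choose n1 2 + 4 * Nat.choose n2 2 + 18 * Nat.choose n3 2
        + 2 * n1 * n2 + 6 * n2 * n3 + 6 * n3 * n1
        + b1 * n1 + b2 * n2 + b3 * n3 + b1 + 4 * n1 + 2 * n2 + 6 * n3)) * hI

theorem hterm2 (b1 b2 b3 n1 n2 n3 : ℕ) :
    ff b1 b2 b3 (n1, n2 + 1, n3) - ff b1 (b2 + 2) b3 (n1, n2 + 1, n3)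
      = (Xx ^ 2 * Qq ^ b2) * ff (b1 + 2) (b2 + 4) (b3 + 6) (n1, n2, n3) := by
  have hI := cancel_poch (Qq ^ 2) (Qq ^ 2) (constCoeff_Qqpow 2 (by norm_num)) n2
    (poch (Qq ^ 2) (Qq ^ 2) n1 * poch (Qq ^ 6) (Qq ^ 6) n3)
  simp only [ff, choose2_succ]
  rw [show poch (Qq ^ 2) (Qq ^ 2) n1 * poch (Qq ^ 2) (Qq ^ 2) (n2 + 1)
      * poch (Qq ^ 6) (Qq ^ 6) n3 = poch (Qq ^ 2) (Qq ^ 2) (n2 + 1)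
      * (poch (Qq ^ 2) (Qq ^ 2) n1 * poch (Qq ^ 6) (Qq ^ 6) n3) by ring,
    show poch (Qq ^ 2) (Qq ^ 2) n1 * poch (Qq ^ 2) (Qq ^ 2) n2
      * poch (Qq ^ 6) (Qq ^ 6) n3 = poch (Qq ^ 2) (Qq ^ 2) n2
      * (poch (Qq ^ 2) (Qq ^ 2) n1 * poch (Qq ^ 6) (Qq ^ 6) n3) by ring]
  linear_combination ((-1 : MvPowerSeries (Fin 2) ℚ) ^ n3 * Xx ^ (n1 + 2 * n2 + 3 * n3 + 2)
    * Qq ^ (4 * Nat.choose n1 2 + 4 * Nat.choose n2 2 + 18 * Nat.choose n3 2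
        + 2 * n1 * n2 + 6 * n2 * n3 + 6 * n3 * n1
        + b1 * n1 + b2 * n2 + b3 * n3 + b2 + 2 * n1 + 4 * n2 + 6 * n3)) * hI

theorem hterm3 (b1 b2 b3 n1 n2 n3 : ℕ) :
    ff b1 b2 b3 (n1, n2, n3 + 1) - ff b1 b2 (b3 + 6) (n1, n2, n3 + 1)
      = -((Xx ^ 3 * Qq ^ b3) * ff (b1 + 6) (b2 + 6) (b3 + 18) (n1, n2, n3)) := by
  have hI := cancel_poch (Qq ^ 6) (Qq ^ 6) (constCoeff_Qqpow 6 (by norm_num)) n3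
    (poch (Qq ^ 2) (Qq ^ 2) n1 * poch (Qq ^ 2) (Qq ^ 2) n2)
  simp only [ff, choose2_succ]
  rw [show poch (Qq ^ 2) (Qq ^ 2) n1 * poch (Qq ^ 2) (Qq ^ 2) n2
      * poch (Qq ^ 6) (Qq ^ 6) (n3 + 1) = poch (Qq ^ 6) (Qq ^ 6) (n3 + 1)
      * (poch (Qq ^ 2) (Qq ^ 2) n1 * poch (Qq ^ 2) (Qq ^ 2) n2) by ring,
    show poch (Qq ^ 2) (Qq ^ 2) n1 * poch (Qq ^ 2) (Qq ^ 2) n2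
      * poch (Qq ^ 6) (Qq ^ 6) n3 = poch (Qq ^ 6) (Qq ^ 6) n3
      * (poch (Qq ^ 2) (Qq ^ 2) n1 * poch (Qq ^ 2) (Qq ^ 2) n2) by ring]
  linear_combination ((-1 : MvPowerSeries (Fin 2) ℚ) ^ (n3 + 1)
    * Xx ^ (n1 + 2 * n2 + 3 * n3 + 3)
    * Qq ^ (4 * Nat.choose n1 2 + 4 * Nat.choose n2 2 + 18 * Nat.choose n3 2
        + 2 * n1 * n2 + 6 * n2 * n3 + 6 * n3 * n1
        + b1 * n1 + b2 * n2 + b3 * n3 + b3 + 6 * n1 + 6 * n2 + 18 * n3)) * hI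

/-! ### Contiguous relations -/

theorem tsum_mul_const (c : MvPowerSeries (Fin 2) ℚ) {g : ℕ × ℕ × ℕ → MvPowerSeries (Fin 2) ℚ}
    (hg : Summable g) : ∑' n, c * g n = c * ∑' n, g n := by
  have := ((hg.hasSum).map (AddMonoidHom.mulLeft c) (contMulLeft c)).tsum_eq
  simpa [Function.comp] using this

theorem R1 (b1 b2 b3 : ℕ) :
    SigmaSum b1 b2 b3 = SigmaSum (b1 + 2) b2 b3
      + Xx * Qq ^ b1 * SigmaSum (b1 + 4) (b2 + 2) (b3 + 6) := by
  have hs := summable_ff b1 b2 b3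
  have hs' := summable_ff (b1 + 2) b2 b3
  have hs'' := summable_ff (b1 + 4) (b2 + 2) (b3 + 6)
  have hinj : Function.Injective (fun m : ℕ × ℕ × ℕ => ((m.1 + 1, m.2) : ℕ × ℕ × ℕ)) := by
    rintro ⟨a1, a2⟩ ⟨c1, c2⟩ h
    simp only [Prod.mk.injEq] at h
    exact Prod.ext (by omega) h.2
  have hsupp : Function.support (fun n => ff b1 b2 b3 n - ff (b1 + 2) b2 b3 n)
      ⊆ Set.range (fun m : ℕ × ℕ × ℕ => ((m.1 + 1, m.2) : ℕ × ℕ × ℕ)) := by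
    rintro ⟨n1, y⟩ hn
    match n1 with
    | 0 =>
      exfalso
      apply hn
      show ff b1 b2 b3 (0, y) - ff (b1 + 2) b2 b3 (0, y) = 0
      rw [sub_eq_zero]
      unfold ff
      norm_num
    | Nat.succ k => exact ⟨(k, y), rfl⟩
  have key : SigmaSum b1 b2 b3 - SigmaSum (b1 + 2) b2 b3
      = Xx * Qq ^ b1 * SigmaSum (b1 + 4) (b2 + 2) (b3 + 6) := by
    rw [SigmaSum_eq b1, SigmaSum_eq (b1 + 2), SigmaSum_eq (b1 + 4), ← Summable.tsum_sub hs hs',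
      ← Function.Injective.tsum_eq hinj hsupp, ← tsum_mul_const _ hs'']
    refine tsum_congr fun m => ?_
    obtain ⟨m1, m2, m3⟩ := m
    exact hterm1 b1 b2 b3 m1 m2 m3
  linear_combination key

theorem R2 (b1 b2 b3 : ℕ) :
    SigmaSum b1 b2 b3 = SigmaSum b1 (b2 + 2) b3
      + Xx ^ 2 * Qq ^ b2 * SigmaSum (b1 + 2) (b2 + 4) (b3 + 6) := by
  have hs := summable_ff b1 b2 b3
  have hs' := summable_ff b1 (b2 + 2) b3
  have hs'' := summable_ff (b1 + 2) (b2 + 4) (b3 + 6)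
  have hinj : Function.Injective
      (fun m : ℕ × ℕ × ℕ => ((m.1, m.2.1 + 1, m.2.2) : ℕ × ℕ × ℕ)) := by
    rintro ⟨a1, a2, a3⟩ ⟨c1, c2, c3⟩ h
    have h' : (a1, a2 + 1, a3) = (c1, c2 + 1, c3) := h
    rw [Prod.mk.injEq, Prod.mk.injEq] at h'
    obtain ⟨h1, h2, h3⟩ := h'
    have h2' : a2 = c2 := by omega
    rw [h1, h2', h3]
  have hsupp : Function.support (fun n => ff b1 b2 b3 n - ff b1 (b2 + 2) b3 n)
      ⊆ Set.range (fun m : ℕ × ℕ × ℕ => ((m.1, m.2.1 + 1, m.2.2) : ℕ × ℕ × ℕ)) := by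
    rintro ⟨n1, n2, n3⟩ hn
    match n2 with
    | 0 =>
      exfalso
      apply hn
      show ff b1 b2 b3 (n1, 0, n3) - ff b1 (b2 + 2) b3 (n1, 0, n3) = 0
      rw [sub_eq_zero]
      unfold ff
      norm_num
    | Nat.succ k => exact ⟨(n1, k, n3), rfl⟩
  have key : SigmaSum b1 b2 b3 - SigmaSum b1 (b2 + 2) b3
      = Xx ^ 2 * Qq ^ b2 * SigmaSum (b1 + 2) (b2 + 4) (b3 + 6) := by
    rw [SigmaSum_eq b1 b2, SigmaSum_eq b1 (b2 + 2), SigmaSum_eq (b1 + 2), ← Summable.tsum_sub hs hs',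
      ← Function.Injective.tsum_eq hinj hsupp, ← tsum_mul_const _ hs'']
    refine tsum_congr fun m => ?_
    obtain ⟨m1, m2, m3⟩ := m
    exact hterm2 b1 b2 b3 m1 m2 m3
  linear_combination key

theorem R3 (b1 b2 b3 : ℕ) :
    SigmaSum b1 b2 b3 = SigmaSum b1 b2 (b3 + 6)
      - Xx ^ 3 * Qq ^ b3 * SigmaSum (b1 + 6) (b2 + 6) (b3 + 18) := by
  have hs := summable_ff b1 b2 b3
  have hs' := summable_ff b1 b2 (b3 + 6)
  have hs'' := summable_ff (b1 + 6) (b2 + 6) (b3 + 18)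
  have hinj : Function.Injective
      (fun m : ℕ × ℕ × ℕ => ((m.1, m.2.1, m.2.2 + 1) : ℕ × ℕ × ℕ)) := by
    rintro ⟨a1, a2, a3⟩ ⟨c1, c2, c3⟩ h
    have h' : (a1, a2, a3 + 1) = (c1, c2, c3 + 1) := h
    rw [Prod.mk.injEq, Prod.mk.injEq] at h'
    obtain ⟨h1, h2, h3⟩ := h'
    have h3' : a3 = c3 := by omega
    rw [h1, h2, h3']
  have hsupp : Function.support (fun n => ff b1 b2 b3 n - ff b1 b2 (b3 + 6) n)
      ⊆ Set.range (fun m : ℕ × ℕ × ℕ => ((m.1, m.2.1, m.2.2 + 1) : ℕ × ℕ × ℕ)) := by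
    rintro ⟨n1, n2, n3⟩ hn
    match n3 with
    | 0 =>
      exfalso
      apply hn
      show ff b1 b2 b3 (n1, n2, 0) - ff b1 b2 (b3 + 6) (n1, n2, 0) = 0
      rw [sub_eq_zero]
      unfold ff
      norm_num
    | Nat.succ k => exact ⟨(n1, n2, k), rfl⟩
  have key : SigmaSum b1 b2 b3 - SigmaSum b1 b2 (b3 + 6)
      = -(Xx ^ 3 * Qq ^ b3 * SigmaSum (b1 + 6) (b2 + 6) (b3 + 18)) := by
    rw [SigmaSum_eq b1 b2 b3, SigmaSum_eq b1 b2 (b3 + 6), SigmaSum_eq (b1 + 6),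
      ← Summable.tsum_sub hs hs', ← Function.Injective.tsum_eq hinj hsupp]
    have : ∑' n : ℕ × ℕ × ℕ, ((Xx ^ 3 * Qq ^ b3) * ff (b1 + 6) (b2 + 6) (b3 + 18) n)
        = (Xx ^ 3 * Qq ^ b3) * ∑' n, ff (b1 + 6) (b2 + 6) (b3 + 18) n :=
      tsum_mul_const _ hs''
    rw [← this, ← tsum_neg]
    refine tsum_congr fun m => ?_
    obtain ⟨m1, m2, m3⟩ := m
    exact hterm3 b1 b2 b3 m1 m2 m3
  linear_combination key

/-! ### The descent -/

theorem base_eq :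
    SigmaSum 1 2 9 - (1 + Xx * Qq + Xx ^ 2 * Qq ^ 2) * SigmaSum 3 6 15
      = Xx ^ 2 * Qq ^ 4 * (SigmaSum 5 8 15 - SigmaSum 7 8 21)
        - Xx ^ 3 * Qq ^ 9 * SigmaSum 9 12 27 := by
  have r1 := R1 1 2 9
  have r2 := R2 3 2 9
  have r3 := R2 3 4 9
  have r4 := R3 3 6 9
  have r5 := R1 3 6 15
  have r6 := R2 5 4 15
  norm_num at r1 r2 r3 r4 r5 r6
  linear_combination r1 + r2 + r3 + r4 + (Xx * Qq) * r6
    - (Xx * Qq + Xx ^ 2 * Qq ^ 2) * r5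

theorem stepU (a α b1 b2 : ℕ) :
    Xx ^ a * Qq ^ α * (SigmaSum b1 b2 (b1 + b2 + 2) - SigmaSum (b1 + 2) b2 (b1 + b2 + 8))
      - Xx ^ (a + 1) * Qq ^ (α + b1) * SigmaSum (b1 + 4) (b2 + 4) (b1 + b2 + 14)
    = Xx ^ (a + 3) * Qq ^ (α + b1 + b2 + 2)
        * (SigmaSum (b1 + 6) (b2 + 6) (b1 + b2 + 14) - SigmaSum (b1 + 8) (b2 + 6) (b1 + b2 + 20))
      - Xx ^ (a + 4) * Qq ^ (α + 2 * b1 + b2 + 8) * SigmaSum (b1 + 10) (b2 + 10) (b1 + b2 + 26)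
    := by
  have h1 := R1 b1 b2 (b1 + b2 + 2)
  have h2 := R3 (b1 + 2) b2 (b1 + b2 + 2)
  have h3 := R2 (b1 + 4) (b2 + 2) (b1 + b2 + 8)
  have h4 := R3 (b1 + 4) (b2 + 4) (b1 + b2 + 8)
  rw [show b1 + b2 + 2 + 6 = b1 + b2 + 8 by omega] at h1 h2
  rw [show b1 + 2 + 6 = b1 + 8 by omega, show b1 + b2 + 2 + 18 = b1 + b2 + 20 by omega] at h2
  rw [show b2 + 2 + 2 = b2 + 4 by omega, show b1 + 4 + 2 = b1 + 6 by omega,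
    show b2 + 2 + 4 = b2 + 6 by omega, show b1 + b2 + 8 + 6 = b1 + b2 + 14 by omega] at h3
  rw [show b1 + b2 + 8 + 6 = b1 + b2 + 14 by omega, show b1 + 4 + 6 = b1 + 10 by omega,
    show b2 + 4 + 6 = b2 + 10 by omega, show b1 + b2 + 8 + 18 = b1 + b2 + 26 by omega] at h4
  linear_combination (Xx ^ a * Qq ^ α) * h1 + (Xx ^ a * Qq ^ α) * h2
    + (Xx ^ (a + 1) * Qq ^ (α + b1)) * h3 + (Xx ^ (a + 1) * Qq ^ (α + b1)) * h4

theorem D_form (n : ℕ) : ∃ a α b1 b2 : ℕ, n ≤ a ∧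
    SigmaSum 1 2 9 - (1 + Xx * Qq + Xx ^ 2 * Qq ^ 2) * SigmaSum 3 6 15
      = Xx ^ a * Qq ^ α * (SigmaSum b1 b2 (b1 + b2 + 2) - SigmaSum (b1 + 2) b2 (b1 + b2 + 8))
        - Xx ^ (a + 1) * Qq ^ (α + b1) * SigmaSum (b1 + 4) (b2 + 4) (b1 + b2 + 14) := by
  induction n with
  | zero =>
    refine ⟨2, 4, 5, 8, by omega, ?_⟩
    norm_num
    exact base_eq
  | succ k ih =>
    obtain ⟨a, α, b1, b2, ha, hD⟩ := ih
    refine ⟨a + 3, α + b1 + b2 + 2, b1 + 6, b2 + 6, by omega, ?_⟩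
    rw [hD, stepU a α b1 b2]
    rw [show b1 + 6 + (b2 + 6) + 2 = b1 + b2 + 14 by omega,
      show b1 + 6 + 2 = b1 + 8 by omega,
      show b1 + 6 + (b2 + 6) + 8 = b1 + b2 + 20 by omega,
      show a + 3 + 1 = a + 4 by omega,
      show α + b1 + b2 + 2 + (b1 + 6) = α + 2 * b1 + b2 + 8 by omega,
      show b1 + 6 + 4 = b1 + 10 by omega, show b2 + 6 + 4 = b2 + 10 by omega,
      show b1 + 6 + (b2 + 6) + 14 = b1 + b2 + 26 by omega]

theorem D_zero :
    SigmaSum 1 2 9 - (1 + Xx * Qq + Xx ^ 2 * Qq ^ 2) * SigmaSum 3 6 15 = 0 := by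
  apply MvPowerSeries.ext
  intro d
  obtain ⟨a, α, b1, b2, ha, hD⟩ := D_form (d 0 + 1)
  rw [hD, map_zero]
  have hfac : Xx ^ a * Qq ^ α
        * (SigmaSum b1 b2 (b1 + b2 + 2) - SigmaSum (b1 + 2) b2 (b1 + b2 + 8))
      - Xx ^ (a + 1) * Qq ^ (α + b1) * SigmaSum (b1 + 4) (b2 + 4) (b1 + b2 + 14)
      = Xx ^ a * (Qq ^ α
          * (SigmaSum b1 b2 (b1 + b2 + 2) - SigmaSum (b1 + 2) b2 (b1 + b2 + 8))
        - Xx * Qq ^ (α + b1) * SigmaSum (b1 + 4) (b2 + 4) (b1 + b2 + 14)) := by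
    ring
  rw [hfac]
  exact coeff_X0_pow_mul _ _ _ (by omega)

theorem Sigma_1_2_9_eq :
    SigmaSum 1 2 9 = (1 + Xx * Qq + Xx ^ 2 * Qq ^ 2) * SigmaSum 3 6 15 := by
  linear_combination D_zero
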